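/- Let ψ : [0,1] → [0,1] be continuous and increasing with 0 < ψ(0) and ψ(1) < 1. For an integer m ≥ 2, define ψ_m(x) := m·x·ψ(x) for 0 ≤ x < 1/m, ψ_m(x) := ψ(x) for 1/m ≤ x ≤ 1−1/m, and ψ_m(x) := 1 − m(1−x)(1−ψ(x)) for 1−1/m < x ≤ 1. Then ψ_m is a continuous increasing function from [0,1] onto itself with ψ_m(0)=0 and ψ_m(1)=1, and the following lower bounds hold: |ψ_m(x) − ψ_m(y)| ≥ m·ψ(0)|x−y| for x,y ∈ (0,1/m); |ψ_m(x) − ψ_m(y)| ≥ m(1−ψ(1))|x−y| for x,y ∈ (1−1/m,1); and |ψ_m(x) − ψ_m(y)| ≥ |ψ(x) − ψ(y)| for all other pairs x,y ∈ (0,1). -/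
import Mathlib


open Set

/-- The boundary modification `ψ_m` of a continuous increasing `ψ : [0,1] → [0,1]` with
`0 < ψ 0` and `ψ 1 < 1` is a continuous increasing surjection of `[0,1]` fixing `0`, `1`,
and satisfies the stated expansion lower bounds. -/
theorem boundary_modification_properties
    (ψ : ℝ → ℝ) (hcont : ContinuousOn ψ (Icc (0:ℝ) 1))
    (hmono : MonotoneOn ψ (Icc (0:ℝ) 1))
    (hmaps : MapsTo ψ (Icc (0:ℝ) 1) (Icc (0:ℝ) 1))
    (h0 : 0 < ψ 0) (h1 : ψ 1 < 1)
    (m : ℕ) (hm : 2 ≤ m)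
    (ψm : ℝ → ℝ)
    (hψm : ∀ x, ψm x =
      if x < 1 / (m:ℝ) then m * x * ψ x
      else if x ≤ 1 - 1 / (m:ℝ) then ψ x
      else 1 - m * (1 - x) * (1 - ψ x)) :
    ContinuousOn ψm (Icc (0:ℝ) 1) ∧
    MonotoneOn ψm (Icc (0:ℝ) 1) ∧
    ψm '' (Icc (0:ℝ) 1) = Icc (0:ℝ) 1 ∧
    ψm 0 = 0 ∧ ψm 1 = 1 ∧
    (∀ x ∈ Ioo (0:ℝ) (1 / (m:ℝ)), ∀ y ∈ Ioo (0:ℝ) (1 / (m:ℝ)),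
      m * ψ 0 * |x - y| ≤ |ψm x - ψm y|) ∧
    (∀ x ∈ Ioo (1 - 1 / (m:ℝ)) 1, ∀ y ∈ Ioo (1 - 1 / (m:ℝ)) 1,
      m * (1 - ψ 1) * |x - y| ≤ |ψm x - ψm y|) ∧
    (∀ x ∈ Ioo (0:ℝ) 1, ∀ y ∈ Ioo (0:ℝ) 1,
      ¬(x ∈ Ioo (0:ℝ) (1 / (m:ℝ)) ∧ y ∈ Ioo (0:ℝ) (1 / (m:ℝ))) →
      ¬(x ∈ Ioo (1 - 1 / (m:ℝ)) 1 ∧ y ∈ Ioo (1 - 1 / (m:ℝ)) 1) →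
      |ψ x - ψ y| ≤ |ψm x - ψm y|) := by
  have hm2 : (2:ℝ) ≤ (m:ℝ) := by exact_mod_cast hm
  have hm0 : (0:ℝ) < (m:ℝ) := by linarith
  have hinv0 : (0:ℝ) < 1 / (m:ℝ) := by positivity
  have hinv2 : 1 / (m:ℝ) ≤ 1/2 := by
    rw [div_le_div_iff₀ hm0 (by norm_num)]; linarith
  have hab : 1 / (m:ℝ) ≤ 1 - 1 / (m:ℝ) := by linarith
  have hψ0 : ∀ x ∈ Icc (0:ℝ) 1, 0 ≤ ψ x := fun x hx => (hmaps hx).1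
  have hψ1 : ∀ x ∈ Icc (0:ℝ) 1, ψ x ≤ 1 := fun x hx => (hmaps hx).2
  have h01 : (0:ℝ) ∈ Icc (0:ℝ) 1 := ⟨le_rfl, zero_le_one⟩
  have h11 : (1:ℝ) ∈ Icc (0:ℝ) 1 := ⟨zero_le_one, le_rfl⟩
  -- piecewise value lemmas
  have hmul_ge : ∀ t : ℝ, 1/(m:ℝ) ≤ t → 1 ≤ (m:ℝ) * t := by
    intro t ht; rw [div_le_iff₀' hm0] at ht; exact ht
  have hmul_le : ∀ t : ℝ, t ≤ 1/(m:ℝ) → (m:ℝ) * t ≤ 1 := by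
    intro t ht; rw [le_div_iff₀' hm0] at ht; exact ht
  have hval1 : ∀ x, x < 1 / (m:ℝ) → ψm x = m * x * ψ x := by
    intro x hx; rw [hψm]; rw [if_pos hx]
  have hval2 : ∀ x, 1 / (m:ℝ) ≤ x → x ≤ 1 - 1 / (m:ℝ) → ψm x = ψ x := by
    intro x hx hx'; rw [hψm, if_neg (not_lt.2 hx), if_pos hx']
  have hval3 : ∀ x, 1 - 1 / (m:ℝ) < x → ψm x = 1 - m * (1 - x) * (1 - ψ x) := by
    intro x hx
    rw [hψm, if_neg (by push_neg; linarith), if_neg (not_le.2 hx)]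
  -- ψm ≤ ψ left of 1 - 1/m,  ψ ≤ ψm right of 1/m
  have hle : ∀ x ∈ Icc (0:ℝ) 1, x ≤ 1 - 1 / (m:ℝ) → ψm x ≤ ψ x := by
    intro x hx hx'
    rcases lt_or_ge x (1 / (m:ℝ)) with h | h
    · rw [hval1 x h]
      have hmx : (m:ℝ) * x ≤ 1 := hmul_le x h.le
      nlinarith [hψ0 x hx, hx.1]
    · rw [hval2 x h hx']
  have hge : ∀ x ∈ Icc (0:ℝ) 1, 1 / (m:ℝ) ≤ x → ψ x ≤ ψm x := by
    intro x hx hx'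
    rcases le_or_gt x (1 - 1 / (m:ℝ)) with h | h
    · rw [hval2 x hx' h]
    · rw [hval3 x h]
      have hmx : (m:ℝ) * (1 - x) ≤ 1 := hmul_le _ (by linarith)
      nlinarith [hψ1 x hx, hx.2]
  -- monotonicity
  have hmono' : MonotoneOn ψm (Icc (0:ℝ) 1) := by
    intro x hx y hy hxy
    have hψxy : ψ x ≤ ψ y := hmono hx hy hxy
    rcases lt_or_ge x (1 / (m:ℝ)) with h1x | h1x
    · rcases lt_or_ge y (1 / (m:ℝ)) with h1y | h1y
      · rw [hval1 x h1x, hval1 y h1y]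
        nlinarith [mul_nonneg (mul_nonneg hm0.le (sub_nonneg.2 hxy)) (hψ0 y hy),
          mul_nonneg (mul_nonneg hm0.le hx.1) (sub_nonneg.2 hψxy)]
      · calc ψm x ≤ ψ x := hle x hx (by linarith)
          _ ≤ ψ y := hψxy
          _ ≤ ψm y := hge y hy h1y
    · rcases le_or_gt x (1 - 1 / (m:ℝ)) with h2x | h2x
      · calc ψm x = ψ x := hval2 x h1x h2x
          _ ≤ ψ y := hψxy
          _ ≤ ψm y := hge y hy (le_trans h1x hxy)
      · have h2y : 1 - 1 / (m:ℝ) < y := lt_of_lt_of_le h2x hxy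
        rw [hval3 x h2x, hval3 y h2y]
        have e1 : 0 ≤ 1 - y := by linarith [hy.2]
        have e2 : 0 ≤ 1 - ψ y := by linarith [hψ1 y hy]
        have e3 : 0 ≤ 1 - ψ x := by linarith [hψ1 x hx]
        nlinarith [mul_nonneg (mul_nonneg hm0.le (sub_nonneg.2 hxy)) e3,
          mul_nonneg (mul_nonneg hm0.le e1) (sub_nonneg.2 hψxy)]
  -- continuity via an explicit continuous formula
  have heq : EqOn ψm
      (fun x => 1 - (1 - ψ x * min ((m:ℝ)*x) 1) * min ((m:ℝ)*(1-x)) 1)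
      (Icc (0:ℝ) 1) := by
    intro x hx
    simp only
    rcases lt_or_ge x (1 / (m:ℝ)) with hc1 | hc1
    · rw [hval1 x hc1, min_eq_left (hmul_le x hc1.le), min_eq_right (hmul_ge _ (by linarith))]
      ring
    · rcases le_or_gt x (1 - 1 / (m:ℝ)) with hc2 | hc2
      · rw [hval2 x hc1 hc2, min_eq_right (hmul_ge x hc1), min_eq_right (hmul_ge (1-x) (by linarith))]
        ring
      · rw [hval3 x hc2, min_eq_right (hmul_ge x (by linarith)), min_eq_left (hmul_le _ (by linarith))]
        ring
  have hcont' : ContinuousOn ψm (Icc (0:ℝ) 1) := by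
    refine ContinuousOn.congr ?_ heq
    apply ContinuousOn.sub continuousOn_const
    apply ContinuousOn.mul
    · exact ContinuousOn.sub continuousOn_const
        (hcont.mul ((continuous_const.mul continuous_id).min continuous_const).continuousOn)
    · exact ((continuous_const.mul (continuous_const.sub continuous_id)).min
        continuous_const).continuousOn
  -- endpoint values
  have hψm0 : ψm 0 = 0 := by rw [hval1 0 hinv0]; ring
  have hψm1 : ψm 1 = 1 := by rw [hval3 1 (by linarith)]; ring
  -- image
  have himg : ψm '' (Icc (0:ℝ) 1) = Icc (0:ℝ) 1 := by
    apply Subset.antisymm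
    · rintro _ ⟨x, hx, rfl⟩
      constructor
      · rw [← hψm0]; exact hmono' h01 hx hx.1
      · rw [← hψm1]; exact hmono' hx h11 hx.2
    · have := intermediate_value_Icc (zero_le_one (α := ℝ)) hcont'
      rw [hψm0, hψm1] at this; exact this
  -- bound A (both points in the left zone), ordered version
  have keyA : ∀ x ∈ Ioo (0:ℝ) (1 / (m:ℝ)), ∀ y ∈ Ioo (0:ℝ) (1 / (m:ℝ)), x ≤ y →
      (m:ℝ) * ψ 0 * |x - y| ≤ |ψm x - ψm y| := by
    intro x hx y hy hxy
    have hxI : x ∈ Icc (0:ℝ) 1 := ⟨hx.1.le, by linarith [hx.2]⟩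
    have hyI : y ∈ Icc (0:ℝ) 1 := ⟨hy.1.le, by linarith [hy.2]⟩
    have h0x : ψ 0 ≤ ψ x := hmono h01 hxI hx.1.le
    have hψxy : ψ x ≤ ψ y := hmono hxI hyI hxy
    have key : (m:ℝ) * ψ 0 * (y - x) ≤ ψm y - ψm x := by
      rw [hval1 x hx.2, hval1 y hy.2]
      nlinarith [mul_nonneg (mul_nonneg hm0.le (sub_nonneg.2 hxy))
          (sub_nonneg.2 (h0x.trans hψxy)),
        mul_nonneg (mul_nonneg hm0.le hx.1.le) (sub_nonneg.2 hψxy)]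
    have hnn : (0:ℝ) ≤ (m:ℝ) * ψ 0 * (y - x) := by
      have := sub_nonneg.2 hxy; positivity
    rw [abs_sub_comm x y, abs_of_nonneg (sub_nonneg.2 hxy),
      abs_sub_comm (ψm x) (ψm y), abs_of_nonneg (by linarith)]
    exact key
  -- bound B (both points in the right zone), ordered version
  have keyB : ∀ x ∈ Ioo (1 - 1 / (m:ℝ)) 1, ∀ y ∈ Ioo (1 - 1 / (m:ℝ)) 1, x ≤ y →
      (m:ℝ) * (1 - ψ 1) * |x - y| ≤ |ψm x - ψm y| := by
    intro x hx y hy hxy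
    have hxI : x ∈ Icc (0:ℝ) 1 := ⟨by linarith [hx.1], hx.2.le⟩
    have hyI : y ∈ Icc (0:ℝ) 1 := ⟨by linarith [hy.1], hy.2.le⟩
    have h1x : ψ x ≤ ψ 1 := hmono hxI h11 hx.2.le
    have hψxy : ψ x ≤ ψ y := hmono hxI hyI hxy
    have hy1 : ψ y ≤ ψ 1 := hmono hyI h11 hy.2.le
    have key : (m:ℝ) * (1 - ψ 1) * (y - x) ≤ ψm y - ψm x := by
      rw [hval3 x hx.1, hval3 y hy.1]
      have e1 : (0:ℝ) ≤ 1 - y := by linarith [hy.2]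
      nlinarith [mul_nonneg (mul_nonneg hm0.le (sub_nonneg.2 hxy)) (sub_nonneg.2 h1x),
        mul_nonneg (mul_nonneg hm0.le e1) (sub_nonneg.2 hψxy)]
    have hnn : (0:ℝ) ≤ (m:ℝ) * (1 - ψ 1) * (y - x) := by
      have h1' : (0:ℝ) ≤ 1 - ψ 1 := by linarith
      have := sub_nonneg.2 hxy; positivity
    rw [abs_sub_comm x y, abs_of_nonneg (sub_nonneg.2 hxy),
      abs_sub_comm (ψm x) (ψm y), abs_of_nonneg (by linarith)]
    exact key
  -- bound C, ordered version
  have keyC : ∀ x ∈ Ioo (0:ℝ) 1, ∀ y ∈ Ioo (0:ℝ) 1, x ≤ y →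
      ¬(x ∈ Ioo (0:ℝ) (1 / (m:ℝ)) ∧ y ∈ Ioo (0:ℝ) (1 / (m:ℝ))) →
      ¬(x ∈ Ioo (1 - 1 / (m:ℝ)) 1 ∧ y ∈ Ioo (1 - 1 / (m:ℝ)) 1) →
      |ψ x - ψ y| ≤ |ψm x - ψm y| := by
    intro x hx y hy hxy hnL hnR
    have hxI : x ∈ Icc (0:ℝ) 1 := ⟨hx.1.le, hx.2.le⟩
    have hyI : y ∈ Icc (0:ℝ) 1 := ⟨hy.1.le, hy.2.le⟩
    have hψxy : ψ x ≤ ψ y := hmono hxI hyI hxy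
    have hxle : x ≤ 1 - 1 / (m:ℝ) := by
      by_contra hc
      push_neg at hc
      exact hnR ⟨⟨hc, hx.2⟩, ⟨lt_of_lt_of_le hc hxy, hy.2⟩⟩
    have hyge : 1 / (m:ℝ) ≤ y := by
      by_contra hc
      push_neg at hc
      exact hnL ⟨⟨hx.1, lt_of_le_of_lt hxy hc⟩, ⟨lt_of_lt_of_le hx.1 hxy, hc⟩⟩
    have e1 : ψm x ≤ ψ x := hle x hxI hxle
    have e2 : ψ y ≤ ψm y := hge y hyI hyge
    rw [abs_sub_comm (ψ x) (ψ y), abs_of_nonneg (by linarith),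
      abs_sub_comm (ψm x) (ψm y), abs_of_nonneg (by linarith)]
    linarith
  refine ⟨hcont', hmono', himg, hψm0, hψm1, ?_, ?_, ?_⟩
  · intro x hx y hy
    rcases le_total x y with h | h
    · exact keyA x hx y hy h
    · rw [abs_sub_comm x y, abs_sub_comm (ψm x) (ψm y)]
      exact keyA y hy x hx h
  · intro x hx y hy
    rcases le_total x y with h | h
    · exact keyB x hx y hy h
    · rw [abs_sub_comm x y, abs_sub_comm (ψm x) (ψm y)]
      exact keyB y hy x hx h
  · intro x hx y hy hnL hnR
    rcases le_total x y with h | h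
    · exact keyC x hx y hy h hnL hnR
    · rw [abs_sub_comm (ψ x) (ψ y), abs_sub_comm (ψm x) (ψm y)]
      exact keyC y hy x hx h (fun ⟨a, b⟩ => hnL ⟨b, a⟩) (fun ⟨a, b⟩ => hnR ⟨b, a⟩)
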